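/- Let 0 < p < 1 and fix ε > 0 with p = 1 − ε/2. Let l be a constant integer with l ≥ 8/(ε ln(1/p)). Then the probability that G(n, m) with m = p·C(n,2) contains a complete bipartite subgraph with parts of sizes l and (ε/8)n is at most n^l · 2^n · p^{(ε/8)n·l}, which tends to 0 as n → ∞. -/

import Mathlib

/-- The edges of the complete graph `K_n`: non-diagonal elements of `Sym2 (Fin n)`. -/
def knBoard (n : ℕ) : Finset (Sym2 (Fin n)) :=
  Finset.univ.filter fun e : Sym2 (Fin n) => ¬ e.IsDiag

/-!
A fixed set of `k` edges lies in a uniformly random `m`-subset of the `N = C(n,2)` edges of `K_n`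
with probability `C(N-k, m-k) / C(N,m) ≤ (m/N)^k ≤ p^k`. The complete bipartite graph on disjoint
parts `A`, `B` of sizes `l` and `q ≥ (ε/8)n` has `lq` edges, and there are at most
`C(n,l) C(n,q) ≤ n^l 2^n` such pairs, so a union bound gives `n^l 2^n p^{(ε/8)nl}`. The choice of
`l` makes `p^{εl/8} ≤ e⁻¹`, so this equals `n^l (2p^{εl/8})^n` with `2p^{εl/8} ≤ 2/e < 1`, which
tends to `0`.
-/

open Finset Filter Topology

namespace Nat

theorem descFactorial_mul_pow_le_descFactorial_mul_pow {m N : ℕ} (h : m ≤ N) (k : ℕ) :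
    m.descFactorial k * N ^ k ≤ N.descFactorial k * m ^ k := by
  have hpow (a : ℕ) : a ^ k = ∏ _i ∈ range k, a := by rw [prod_const, card_range]
  rw [descFactorial_eq_prod_range, descFactorial_eq_prod_range, hpow, hpow, ← prod_mul_distrib,
    ← prod_mul_distrib]
  refine prod_le_prod' fun i _ => ?_
  rw [Nat.sub_mul, Nat.sub_mul, Nat.mul_comm N m]
  exact Nat.sub_le_sub_left (Nat.mul_le_mul_left i h) _

theorem choose_mul_pow_le_choose_mul_pow {m N : ℕ} (h : m ≤ N) (k : ℕ) :
    m.choose k * N ^ k ≤ N.choose k * m ^ k := by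
  have := descFactorial_mul_pow_le_descFactorial_mul_pow h k
  rw [descFactorial_eq_factorial_mul_choose, descFactorial_eq_factorial_mul_choose,
    Nat.mul_assoc, Nat.mul_assoc] at this
  exact Nat.le_of_mul_le_mul_left this k.factorial_pos

theorem choose_sub_mul_pow_le_choose_mul_pow {m N k : ℕ} (hkm : k ≤ m) (hmN : m ≤ N) :
    (N - k).choose (m - k) * N ^ k ≤ N.choose m * m ^ k := by
  have hk : 0 < N.choose k := choose_pos (hkm.trans hmN)
  refine Nat.le_of_mul_le_mul_left ?_ hk
  calc N.choose k * ((N - k).choose (m - k) * N ^ k)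
      = N.choose m * (m.choose k * N ^ k) := by rw [← Nat.mul_assoc, ← choose_mul hkm]; ring
    _ ≤ N.choose m * (N.choose k * m ^ k) :=
      Nat.mul_le_mul_left _ (choose_mul_pow_le_choose_mul_pow hmN k)
    _ = N.choose k * (N.choose m * m ^ k) := by ring

theorem choose_sub_le_pow_mul_choose {m N k : ℕ} {p : ℝ} (hp1 : p ≤ 1) (hkm : k ≤ m)
    (hm : (m : ℝ) ≤ p * N) : ((N - k).choose (m - k) : ℝ) ≤ p ^ k * N.choose m := by
  obtain rfl | hN := N.eq_zero_or_pos
  · obtain rfl : m = 0 := by simpa using hm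
    obtain rfl : k = 0 := Nat.le_zero.mp hkm
    simp
  have hmN : m ≤ N := by exact_mod_cast hm.trans (mul_le_of_le_one_left (by positivity) hp1)
  refine le_of_mul_le_mul_right ?_ (pow_pos (cast_pos.mpr hN) k)
  calc ((N - k).choose (m - k) : ℝ) * N ^ k ≤ N.choose m * m ^ k := by
        exact_mod_cast choose_sub_mul_pow_le_choose_mul_pow hkm hmN
    _ ≤ N.choose m * (p * N) ^ k := by gcongr
    _ = p ^ k * N.choose m * N ^ k := by ring

theorem card_subtype_mem_and {α : Type*} (s : Finset α) (P : α → Prop) [DecidablePred P] :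
    Nat.card {x // x ∈ s ∧ P x} = #{x ∈ s | P x} := by
  rw [← Nat.card_eq_finsetCard]
  exact Nat.card_congr (Equiv.subtypeEquivRight fun x => mem_filter.symm)

end Nat

section SupersetCount

variable {α : Type*} [DecidableEq α]

theorem card_filter_superset_powersetCard_le {s t : Finset α} (hts : t ⊆ s) (m : ℕ) :
    #{E ∈ s.powersetCard m | t ⊆ E} ≤ (#s - #t).choose (m - #t) := by
  have : {E ∈ s.powersetCard m | t ⊆ E} ⊆ ((s \ t).powersetCard (m - #t)).image (· ∪ t) := by
    intro E hE
    obtain ⟨⟨hEs, rfl⟩, htE⟩ := by simpa only [mem_filter, mem_powersetCard] using hE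
    refine mem_image.mpr ⟨E \ t, mem_powersetCard.mpr ⟨sdiff_subset_sdiff hEs le_rfl, ?_⟩, ?_⟩
    · exact card_sdiff_of_subset htE
    · exact sdiff_union_of_subset htE
  calc _ ≤ _ := card_le_card this
    _ ≤ _ := card_image_le
    _ = _ := by rw [card_powersetCard, card_sdiff_of_subset hts]

theorem card_filter_superset_powersetCard_le_pow_mul {s t : Finset α} (hts : t ⊆ s) {m : ℕ}
    {p : ℝ} (hp0 : 0 ≤ p) (hp1 : p ≤ 1) (hm : (m : ℝ) ≤ p * #s) :
    (#{E ∈ s.powersetCard m | t ⊆ E} : ℝ) ≤ p ^ #t * (#s).choose m := by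
  rcases le_or_gt #t m with htm | hmt
  · calc (#{E ∈ s.powersetCard m | t ⊆ E} : ℝ) ≤ (#s - #t).choose (m - #t) := by
          exact_mod_cast card_filter_superset_powersetCard_le hts m
      _ ≤ _ := Nat.choose_sub_le_pow_mul_choose hp1 htm hm
  · have : {E ∈ s.powersetCard m | t ⊆ E} = ∅ := by
      refine filter_false_of_mem fun E hE htE => ?_
      have := card_le_card htE
      rw [(mem_powersetCard.mp hE).2] at this
      omega
    rw [this, card_empty, Nat.cast_zero]
    positivity

theorem card_filter_exists_superset_powersetCard_le {ι : Type*} {s : Finset α} (I : Finset ι)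
    (t : ι → Finset α) {k m : ℕ} (ht : ∀ i ∈ I, t i ⊆ s ∧ #(t i) = k) {p : ℝ} (hp0 : 0 ≤ p)
    (hp1 : p ≤ 1) (hm : (m : ℝ) ≤ p * #s) :
    (#{E ∈ s.powersetCard m | ∃ i ∈ I, t i ⊆ E} : ℝ) ≤ #I * (p ^ k * (#s).choose m) := by
  have hsub : {E ∈ s.powersetCard m | ∃ i ∈ I, t i ⊆ E}
      ⊆ I.biUnion fun i => {E ∈ s.powersetCard m | t i ⊆ E} := by
    intro E hE
    obtain ⟨hE, i, hi, htE⟩ := mem_filter.mp hE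
    exact mem_biUnion.mpr ⟨i, hi, mem_filter.mpr ⟨hE, htE⟩⟩
  calc (#{E ∈ s.powersetCard m | ∃ i ∈ I, t i ⊆ E} : ℝ)
      ≤ ∑ i ∈ I, (#{E ∈ s.powersetCard m | t i ⊆ E} : ℝ) := by
        exact_mod_cast (card_le_card hsub).trans card_biUnion_le
    _ ≤ #I * (p ^ k * (#s).choose m) := by
      rw [← nsmul_eq_mul]
      refine sum_le_card_nsmul _ _ _ fun i hi => ?_
      rw [← (ht i hi).2]
      exact card_filter_superset_powersetCard_le_pow_mul (ht i hi).1 hp0 hp1 hm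

end SupersetCount

section Bipartite

variable {V : Type*} [DecidableEq V]

def bipartiteEdges (A B : Finset V) : Finset (Sym2 V) :=
  (A ×ˢ B).image fun x => s(x.1, x.2)

theorem bipartiteEdges_subset_iff {A B : Finset V} {E : Finset (Sym2 V)} :
    bipartiteEdges A B ⊆ E ↔ ∀ a ∈ A, ∀ b ∈ B, s(a, b) ∈ E := by
  simp only [bipartiteEdges, image_subset_iff, mem_product, and_imp, Prod.forall]
  exact ⟨fun h a ha b hb => h a b ha hb, fun h a b ha hb => h a ha b hb⟩

theorem card_bipartiteEdges {A B : Finset V} (h : Disjoint A B) :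
    #(bipartiteEdges A B) = #A * #B := by
  rw [bipartiteEdges, card_image_of_injOn, card_product]
  rintro ⟨a, b⟩ hab ⟨a', b'⟩ hab' heq
  simp only [coe_product, Set.mem_prod, mem_coe] at hab hab'
  rcases Sym2.eq_iff.mp heq with ⟨rfl, rfl⟩ | ⟨rfl, rfl⟩
  · rfl
  · exact (disjoint_left.mp h hab.1 hab'.2).elim

variable (V) in
def disjointPairs [Fintype V] (l q : ℕ) :
    Finset (Finset V × Finset V) :=
  {AB ∈ univ.powersetCard l ×ˢ univ.powersetCard q | Disjoint AB.1 AB.2}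

theorem mem_disjointPairs [Fintype V] {l q : ℕ} {AB : Finset V × Finset V} :
    AB ∈ disjointPairs V l q ↔ Disjoint AB.1 AB.2 ∧ #AB.1 = l ∧ #AB.2 = q := by
  simp only [disjointPairs, mem_filter, mem_product, mem_powersetCard, subset_univ, true_and]
  tauto

variable (V) in
theorem card_disjointPairs_le [Fintype V] (l q : ℕ) :
    #(disjointPairs V l q) ≤ Fintype.card V ^ l * 2 ^ Fintype.card V :=
  calc _ ≤ #((univ : Finset V).powersetCard l ×ˢ (univ : Finset V).powersetCard q) :=
        card_filter_le _ _
    _ = (Fintype.card V).choose l * (Fintype.card V).choose q := by simp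
    _ ≤ _ := Nat.mul_le_mul (Nat.choose_le_pow _ l) (Nat.choose_le_two_pow _ q)

end Bipartite

theorem card_knBoard (n : ℕ) : #(knBoard n) = n.choose 2 := by
  rw [knBoard, ← Fintype.card_subtype, Sym2.card_subtype_not_diag, Fintype.card_fin]

theorem bipartiteEdges_subset_knBoard {n : ℕ} {A B : Finset (Fin n)} (h : Disjoint A B) :
    bipartiteEdges A B ⊆ knBoard n := by
  intro e he
  obtain ⟨⟨a, b⟩, hab, rfl⟩ := mem_image.mp he
  simp only [mem_product] at hab
  simp only [knBoard, mem_filter, mem_univ, Sym2.mk_isDiag_iff, true_and]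
  rintro rfl
  exact disjoint_left.mp h hab.1 hab.2

theorem card_filter_completeBipartite_powersetCard_le {n m l q : ℕ} {p : ℝ} (hp0 : 0 ≤ p)
    (hp1 : p ≤ 1) (hm : (m : ℝ) ≤ p * n.choose 2) :
    (#{E ∈ (knBoard n).powersetCard m | ∃ A B : Finset (Fin n), Disjoint A B ∧ #A = l ∧
        #B = q ∧ ∀ a ∈ A, ∀ b ∈ B, s(a, b) ∈ E} : ℝ)
      ≤ n ^ l * 2 ^ n * (p ^ (l * q) * (n.choose 2).choose m) := by
  have hfilter : {E ∈ (knBoard n).powersetCard m | ∃ A B : Finset (Fin n), Disjoint A B ∧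
      #A = l ∧ #B = q ∧ ∀ a ∈ A, ∀ b ∈ B, s(a, b) ∈ E} = {E ∈ (knBoard n).powersetCard m |
        ∃ AB ∈ disjointPairs (Fin n) l q, bipartiteEdges AB.1 AB.2 ⊆ E} := by
    refine filter_congr fun E _ => ?_
    simp only [mem_disjointPairs, bipartiteEdges_subset_iff, Prod.exists, and_assoc]
  have hedges : ∀ AB ∈ disjointPairs (Fin n) l q,
      bipartiteEdges AB.1 AB.2 ⊆ knBoard n ∧ #(bipartiteEdges AB.1 AB.2) = l * q := by
    rintro ⟨A, B⟩ hAB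
    obtain ⟨hdisj, rfl, rfl⟩ := mem_disjointPairs.mp hAB
    exact ⟨bipartiteEdges_subset_knBoard hdisj, card_bipartiteEdges hdisj⟩
  have hpairs : (#(disjointPairs (Fin n) l q) : ℝ) ≤ n ^ l * 2 ^ n := by
    exact_mod_cast Fintype.card_fin n ▸ card_disjointPairs_le (Fin n) l q
  have key := card_filter_exists_superset_powersetCard_le _ _ hedges hp0 hp1
    (by rwa [card_knBoard])
  rw [hfilter]
  rw [card_knBoard] at key
  exact key.trans (by gcongr)

theorem two_mul_rpow_lt_one {p c : ℝ} (hp : 0 < p) (hc : 1 ≤ c * Real.log (1 / p)) :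
    2 * p ^ c < 1 := by
  have hpc : p ^ c ≤ Real.exp (-1) := by
    rw [Real.rpow_def_of_pos hp, Real.exp_le_exp]
    rw [one_div, Real.log_inv] at hc
    linarith
  calc 2 * p ^ c ≤ 2 * Real.exp (-1) := by gcongr
    _ < 1 := by
      rw [Real.exp_neg, ← div_eq_mul_inv, div_lt_one (Real.exp_pos 1)]
      linarith [Real.exp_one_gt_d9]

theorem tendsto_pow_mul_two_pow_mul_rpow_atTop (l : ℕ) {p c : ℝ} (hp : 0 < p)
    (h : 2 * p ^ c < 1) :
    Tendsto (fun n : ℕ => (n : ℝ) ^ l * 2 ^ n * p ^ (c * n)) atTop (𝓝 0) := by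
  convert tendsto_pow_const_mul_const_pow_of_lt_one l (by positivity) h using 2 with n
  rw [Real.rpow_mul_natCast hp.le, mul_pow, mul_assoc]

/-- for `p = 1 - ε/2` and a constant integer `l ≥ 8/(ε ln(1/p))`, the probability
that `G(n,m)` with `m = p·C(n,2)` contains a complete bipartite subgraph with parts of sizes
`l` and `(ε/8)n` is at most `n^l · 2^n · p^{(ε/8)n·l}`, which tends to `0` as `n → ∞`. -/
theorem stmt_4 (ε : ℝ) (hε : 0 < ε) (hε2 : ε < 2) (p : ℝ) (hp : p = 1 - ε / 2)
    (l : ℕ) (hl : 8 / (ε * Real.log (1 / p)) ≤ (l : ℝ))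
    (m q : ℕ → ℕ)
    (hm : ∀ n, (m n : ℝ) ≤ p * (n.choose 2 : ℝ))
    (hq : ∀ n, q n = ⌈ε / 8 * (n : ℝ)⌉₊) :
    (∀ n : ℕ,
      (Nat.card {E : Finset (Sym2 (Fin n)) //
          E ∈ (knBoard n).powersetCard (m n) ∧
          ∃ A B : Finset (Fin n), Disjoint A B ∧ A.card = l ∧ B.card = q n ∧
            ∀ a ∈ A, ∀ b ∈ B, s(a, b) ∈ E} : ℝ) /
        ((knBoard n).powersetCard (m n)).card
      ≤ (n : ℝ) ^ l * 2 ^ n * p ^ (ε / 8 * (n : ℝ) * (l : ℝ))) ∧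
    Filter.Tendsto
      (fun n : ℕ => (n : ℝ) ^ l * 2 ^ n * p ^ (ε / 8 * (n : ℝ) * (l : ℝ)))
      Filter.atTop (nhds 0) := by
  have hp0 : 0 < p := by linarith
  have hp1 : p < 1 := by linarith
  refine ⟨fun n => ?_, ?_⟩
  · have hpow : p ^ (l * q n) ≤ p ^ (ε / 8 * (n : ℝ) * (l : ℝ)) := by
      rw [← Real.rpow_natCast]
      refine Real.rpow_le_rpow_of_exponent_ge hp0 hp1.le ?_
      rw [hq n, Nat.cast_mul, mul_comm (l : ℝ)]
      gcongr
      exact Nat.le_ceil _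
    have hmn : m n ≤ n.choose 2 := by
      exact_mod_cast (hm n).trans (mul_le_of_le_one_left (by positivity) hp1.le)
    have hC : (0 : ℝ) < #((knBoard n).powersetCard (m n)) := by
      rw [card_powersetCard, card_knBoard]
      exact_mod_cast Nat.choose_pos hmn
    classical
    rw [Nat.card_subtype_mem_and, div_le_iff₀ hC, card_powersetCard, card_knBoard]
    calc _ ≤ _ := card_filter_completeBipartite_powersetCard_le hp0.le hp1.le (hm n)
      _ ≤ _ := by rw [← mul_assoc]; gcongr
  · have hlog : 0 < Real.log (1 / p) := Real.log_pos (by rwa [one_lt_div hp0])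
    have hc : 1 ≤ ε / 8 * l * Real.log (1 / p) := by
      rw [div_le_iff₀ (by positivity)] at hl
      linarith
    convert tendsto_pow_mul_two_pow_mul_rpow_atTop l hp0 (two_mul_rpow_lt_one hp0 hc) using 4
    ring
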